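/- Let X and Y be Tychonoff (completely regular Hausdorff) spaces, E and F nontrivial real normed vector spaces, and T : C*(X,E) → C*(Y,F) a biseparating map. Let y ∈ Y and let x ∈ StoneCech X be a support point of y. If f ∈ C*(X,E) satisfies (Tf)(y) ≠ 0, then x belongs to the closure in StoneCech X of ι_X(c(f)), where c(f) = {x' ∈ X : f(x') ≠ 0}. -/

import Mathlib

open scoped BoundedContinuousFunction

/-- `x ∈ StoneCech X` is a support point of `y ∈ Y` (relative to a map
`T : C*(X,E) → C*(Y,F)`) if for every open neighborhood `U` of `x` in `StoneCech X` there is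
`f ∈ C*(X,E)` with cozero set contained in `ι_X⁻¹(U)` and `(Tf)(y) ≠ 0`. -/
def IsSupportPoint {X Y E F : Type*} [TopologicalSpace X] [TopologicalSpace Y]
    [NormedAddCommGroup E] [NormedAddCommGroup F]
    (T : (X →ᵇ E) → (Y →ᵇ F)) (y : Y) (x : StoneCech X) : Prop :=
  ∀ U : Set (StoneCech X), IsOpen U → x ∈ U →
    ∃ f : X →ᵇ E, {x' : X | f x' ≠ 0} ⊆ stoneCechUnit ⁻¹' U ∧ T f y ≠ 0

open Function in
theorem norm_mul_norm_eq_zero_of_disjoint_support {X E : Type*} [NormedAddCommGroup E]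
    {f g : X → E} (h : Disjoint (support f) (support g)) (x : X) : ‖f x‖ * ‖g x‖ = 0 := by
  by_cases hfx : f x = 0
  · simp [hfx]
  · simp [notMem_support.1 (h.notMem_of_mem_left (mem_support.2 hfx))]

theorem stmt_13_general {X Y E F : Type*}
    [TopologicalSpace X] [TopologicalSpace Y]
    [NormedAddCommGroup E]
    [NormedAddCommGroup F]
    (T : (X →ᵇ E) → (Y →ᵇ F))
    (hsep : ∀ f g : X →ᵇ E, (∀ x, ‖f x‖ * ‖g x‖ = 0) → ∀ y, ‖T f y‖ * ‖T g y‖ = 0)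
    (y : Y) (x : StoneCech X) (hx : IsSupportPoint T y x)
    (f : X →ᵇ E) (hf : T f y ≠ 0) :
    x ∈ closure (stoneCechUnit '' {x' : X | f x' ≠ 0}) := by
  set K := closure (stoneCechUnit '' {x' : X | f x' ≠ 0})
  by_contra hxK
  obtain ⟨g, hgK, hgy⟩ := hx Kᶜ isClosed_closure.isOpen_compl hxK
  have hfK : {x' : X | f x' ≠ 0} ⊆ stoneCechUnit ⁻¹' K :=
    fun x' hx' => subset_closure (Set.mem_image_of_mem _ hx')
  have hfg : Disjoint (Function.support f) (Function.support g) :=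
    (disjoint_compl_right.preimage stoneCechUnit).mono hfK hgK
  exact mul_ne_zero (norm_ne_zero_iff.2 hf) (norm_ne_zero_iff.2 hgy)
    (hsep f g (norm_mul_norm_eq_zero_of_disjoint_support hfg) y)

/-- For a biseparating `T : C*(X,E) → C*(Y,F)`, `y ∈ Y` and a support point
`x` of `y`: if `(Tf)(y) ≠ 0` then `x` lies in the closure in `StoneCech X` of
`ι_X(c(f))`. -/
theorem stmt_13 {X Y E F : Type*}
    [TopologicalSpace X] [T35Space X] [TopologicalSpace Y] [T35Space Y]
    [NormedAddCommGroup E] [NormedSpace ℝ E] [Nontrivial E]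
    [NormedAddCommGroup F] [NormedSpace ℝ F] [Nontrivial F]
    (T : (X →ᵇ E) → (Y →ᵇ F))
    (hbij : Function.Bijective T)
    (hadd : ∀ f g : X →ᵇ E, T (f + g) = T f + T g)
    (hsep : ∀ f g : X →ᵇ E, (∀ x, ‖f x‖ * ‖g x‖ = 0) → ∀ y, ‖T f y‖ * ‖T g y‖ = 0)
    (hsep' : ∀ f g : X →ᵇ E, (∀ y, ‖T f y‖ * ‖T g y‖ = 0) → ∀ x, ‖f x‖ * ‖g x‖ = 0)
    (y : Y) (x : StoneCech X) (hx : IsSupportPoint T y x)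
    (f : X →ᵇ E) (hf : T f y ≠ 0) :
    x ∈ closure (stoneCechUnit '' {x' : X | f x' ≠ 0}) :=
  stmt_13_general T hsep y x hx f hf
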